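/- Define polynomials R_1 = 4d - c^2, S_1 = d, and for m ≥ 1, R_{m+1} = R_m^2 + c·R_m·S_m + d·S_m^2 and S_{m+1} = R_m^2. Then for all m ≥ 1, the total degree of the polynomial c·R_m + 2d·S_m equals (7·2^m + 3 - (-1)^m)/6. -/

import Mathlib

/-!
Write `a_m, b_m` for the expected total degrees of `R_m, S_m`: `a_1 = 2`, `b_1 = 1`,
`a_{m+1} = 1 + a_m + b_m`, `b_{m+1} = 2 a_m`. Then `b_m ≤ a_m ≤ b_m + 1`, which makes
`c R_m S_m` the term of largest degree in `R_{m+1}`, and the recursion gives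
`1 + a_m = (7·2^m + 3 - (-1)^m)/6`. The upper bound `deg (c R_m + 2 d S_m) ≤ 1 + a_m` is
immediate. For the lower bound set `d = 0`: the images `ρ_m, σ_m ∈ ℤ[c]` satisfy
`ρ_{m+1} = ρ_m² + c ρ_m σ_m`, `σ_{m+1} = ρ_m²`, and from `ρ_2 = σ_2 = c⁴` on both have
positive leading coefficients, so no cancellation occurs and `deg ρ_m = a_m`. Finally
`c R_m + 2 d S_m` specializes to `c ρ_m`.
-/

open MvPolynomial

/-- The pair `(R_{m+1}, S_{m+1})` of polynomials in `c = X 0` and `d = X 1`: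
`R_1 = 4d - c²`, `S_1 = d`, `R_{m+1} = R_m² + c·R_m·S_m + d·S_m²`, `S_{m+1} = R_m²`. -/
noncomputable def RS : ℕ → MvPolynomial (Fin 2) ℤ × MvPolynomial (Fin 2) ℤ
  | 0 => (4 * X 1 - (X 0) ^ 2, X 1)
  | (m + 1) =>
      ((RS m).1 ^ 2 + X 0 * (RS m).1 * (RS m).2 + X 1 * (RS m).2 ^ 2, (RS m).1 ^ 2)

/-- `R_m` for `m ≥ 1`. -/
noncomputable def Rpoly (m : ℕ) : MvPolynomial (Fin 2) ℤ := (RS (m - 1)).1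

/-- `S_m` for `m ≥ 1`. -/
noncomputable def Spoly (m : ℕ) : MvPolynomial (Fin 2) ℤ := (RS (m - 1)).2

namespace Polynomial

variable {R : Type*} [Semiring R] [Preorder R] [AddLeftStrictMono R] {p q : R[X]}

theorem leadingCoeff_add_pos (hp : 0 < p.leadingCoeff) (hq : 0 < q.leadingCoeff) :
    0 < (p + q).leadingCoeff := by
  rcases lt_trichotomy p.degree q.degree with h | h | h
  · rwa [leadingCoeff_add_of_degree_lt h]
  · rw [leadingCoeff_add_of_degree_eq h (add_pos hp hq).ne']
    exact add_pos hp hq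
  · rwa [leadingCoeff_add_of_degree_lt' h]

theorem natDegree_add_of_leadingCoeff_pos (hp : 0 < p.leadingCoeff) (hq : 0 < q.leadingCoeff) :
    (p + q).natDegree = max p.natDegree q.natDegree := by
  rcases lt_trichotomy p.natDegree q.natDegree with h | h | h
  · rw [natDegree_add_eq_right_of_natDegree_lt h, max_eq_right h.le]
  · have hpq := degree_add_eq_of_leadingCoeff_add_ne_zero (add_pos hp hq).ne'
    rw [degree_eq_natDegree (leadingCoeff_ne_zero.mp hp.ne'),
      degree_eq_natDegree (leadingCoeff_ne_zero.mp hq.ne'), h, max_self] at hpq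
    rw [natDegree_eq_of_degree_eq_some hpq, h, max_self]
  · rw [natDegree_add_eq_left_of_natDegree_lt h, max_eq_left h.le]

end Polynomial

theorem MvPolynomial.totalDegree_ofNat {σ R : Type*} [CommSemiring R] (n : ℕ) [n.AtLeastTwo] :
    (ofNat(n) : MvPolynomial σ R).totalDegree = 0 := by
  rw [← map_ofNat C n, totalDegree_C]

theorem MvPolynomial.natDegree_aeval_le_totalDegree {σ R : Type*} [CommSemiring R]
    (F : MvPolynomial σ R) {f : σ → Polynomial R} (hf : ∀ i, (f i).natDegree ≤ 1) :
    (aeval f F).natDegree ≤ F.totalDegree := by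
  simpa using aeval_natDegree_le F le_rfl f hf

/-- `degRS n = (a_{n+1}, b_{n+1})`, indexed like `RS`. -/
def degRS : ℕ → ℕ × ℕ
  | 0 => (2, 1)
  | n + 1 => (1 + (degRS n).1 + (degRS n).2, 2 * (degRS n).1)

lemma degRS_snd_le_fst_le (n : ℕ) :
    (degRS n).2 ≤ (degRS n).1 ∧ (degRS n).1 ≤ (degRS n).2 + 1 := by
  induction n with
  | zero => simp [degRS]
  | succ n ih => simp only [degRS]; omega

lemma degRS_cast_eq (n : ℕ) :
    ((degRS n).1 : ℚ) = (7 * 2 ^ (n + 1) - 3 + (-1) ^ n) / 6 ∧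
      ((degRS n).2 : ℚ) = (7 * 2 ^ (n + 1) - 6 - 2 * (-1) ^ n) / 6 := by
  induction n with
  | zero => norm_num [degRS]
  | succ n ih =>
    simp only [degRS]
    push_cast
    rw [ih.1, ih.2]
    constructor <;> ring

lemma totalDegree_RS_le (n : ℕ) :
    (RS n).1.totalDegree ≤ (degRS n).1 ∧ (RS n).2.totalDegree ≤ (degRS n).2 := by
  induction n with
  | zero =>
    refine ⟨?_, (totalDegree_X 1).le⟩
    grw [RS, totalDegree_sub, totalDegree_mul, totalDegree_X_pow, totalDegree_X,
      totalDegree_ofNat]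
    simp [degRS]
  | succ n ih =>
    obtain ⟨hR, hS⟩ := ih
    have hR2 := (totalDegree_pow (RS n).1 2).trans (Nat.mul_le_mul_left 2 hR)
    have hcRS : (X 0 * (RS n).1 * (RS n).2).totalDegree ≤ 1 + (degRS n).1 + (degRS n).2 := by
      grw [totalDegree_mul, totalDegree_mul, totalDegree_X, hR, hS]
    have hdS2 : (X 1 * (RS n).2 ^ 2).totalDegree ≤ 1 + 2 * (degRS n).2 := by
      grw [totalDegree_mul, totalDegree_pow, totalDegree_X, hS]
    have hdeg := degRS_snd_le_fst_le n
    refine ⟨?_, hR2⟩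
    grw [RS, totalDegree_add, totalDegree_add, hR2, hcRS, hdS2]
    simp only [degRS]
    omega

noncomputable def evalAtDZero : MvPolynomial (Fin 2) ℤ →ₐ[ℤ] Polynomial ℤ :=
  aeval ![Polynomial.X, 0]

lemma evalAtDZero_RS_zero :
    evalAtDZero (RS 0).1 = -Polynomial.X ^ 2 ∧ evalAtDZero (RS 0).2 = 0 := by
  simp [RS, evalAtDZero]

lemma evalAtDZero_RS_succ (n : ℕ) :
    evalAtDZero (RS (n + 1)).1 = evalAtDZero (RS n).1 ^ 2 +
      Polynomial.X * evalAtDZero (RS n).1 * evalAtDZero (RS n).2 ∧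
    evalAtDZero (RS (n + 1)).2 = evalAtDZero (RS n).1 ^ 2 := by
  simp [RS, evalAtDZero]

lemma natDegree_eq_and_leadingCoeff_pos_evalAtDZero_RS_succ (n : ℕ) :
    (evalAtDZero (RS (n + 1)).1).natDegree = (degRS (n + 1)).1 ∧
      0 < (evalAtDZero (RS (n + 1)).1).leadingCoeff ∧
    (evalAtDZero (RS (n + 1)).2).natDegree = (degRS (n + 1)).2 ∧
      0 < (evalAtDZero (RS (n + 1)).2).leadingCoeff := by
  induction n with
  | zero =>
    obtain ⟨hR, hS⟩ := evalAtDZero_RS_zero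
    obtain ⟨hR', hS'⟩ := evalAtDZero_RS_succ 0
    simp [hR', hS', hR, hS, degRS, ← pow_mul]
  | succ n ih =>
    obtain ⟨hR', hS'⟩ := evalAtDZero_RS_succ (n + 1)
    set ρ := evalAtDZero (RS (n + 1)).1
    set σ := evalAtDZero (RS (n + 1)).2
    obtain ⟨hρ, hρ_pos, hσ, hσ_pos⟩ := ih
    have hρ0 : ρ ≠ 0 := Polynomial.leadingCoeff_ne_zero.mp hρ_pos.ne'
    have hσ0 : σ ≠ 0 := Polynomial.leadingCoeff_ne_zero.mp hσ_pos.ne'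
    have hρ2 : (ρ ^ 2).natDegree = 2 * (degRS (n + 1)).1 := by
      rw [Polynomial.natDegree_pow, hρ]
    have hρ2_pos : 0 < (ρ ^ 2).leadingCoeff := by
      rw [Polynomial.leadingCoeff_pow]
      positivity
    have hXρσ :
        (Polynomial.X * ρ * σ).natDegree = 1 + (degRS (n + 1)).1 + (degRS (n + 1)).2 := by
      rw [Polynomial.natDegree_mul (mul_ne_zero Polynomial.X_ne_zero hρ0) hσ0,
        Polynomial.natDegree_mul Polynomial.X_ne_zero hρ0, Polynomial.natDegree_X, hρ, hσ]
    have hXρσ_pos : 0 < (Polynomial.X * ρ * σ).leadingCoeff := by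
      rw [Polynomial.leadingCoeff_mul, Polynomial.leadingCoeff_mul, Polynomial.leadingCoeff_X,
        one_mul]
      exact mul_pos hρ_pos hσ_pos
    have hdeg := degRS_snd_le_fst_le (n + 1)
    rw [hR', hS', Polynomial.natDegree_add_of_leadingCoeff_pos hρ2_pos hXρσ_pos, hρ2, hXρσ]
    exact ⟨max_eq_right (by omega), Polynomial.leadingCoeff_add_pos hρ2_pos hXρσ_pos, rfl,
      hρ2_pos⟩

lemma natDegree_evalAtDZero_RS_fst (n : ℕ) :
    (evalAtDZero (RS n).1).natDegree = (degRS n).1 := by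
  cases n with
  | zero => simp [evalAtDZero_RS_zero.1, degRS]
  | succ n => exact (natDegree_eq_and_leadingCoeff_pos_evalAtDZero_RS_succ n).1

lemma totalDegree_cR_add_two_dS_eq (n : ℕ) :
    (X 0 * (RS n).1 + 2 * X 1 * (RS n).2 : MvPolynomial (Fin 2) ℤ).totalDegree
      = 1 + (degRS n).1 := by
  obtain ⟨hR, hS⟩ := totalDegree_RS_le n
  have hdeg := degRS_snd_le_fst_le n
  apply le_antisymm
  · grw [totalDegree_add, totalDegree_mul, totalDegree_mul, totalDegree_mul, totalDegree_X,
      totalDegree_X, totalDegree_ofNat, hR, hS]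
    omega
  · have hspec : evalAtDZero (X 0 * (RS n).1 + 2 * X 1 * (RS n).2) =
        Polynomial.X * evalAtDZero (RS n).1 := by
      simp [evalAtDZero]
    have hρ0 : evalAtDZero (RS n).1 ≠ 0 := by
      refine Polynomial.ne_zero_of_natDegree_gt (n := 0) ?_
      rw [natDegree_evalAtDZero_RS_fst]
      cases n <;> simp [degRS]
    calc 1 + (degRS n).1
        = (evalAtDZero (X 0 * (RS n).1 + 2 * X 1 * (RS n).2)).natDegree := by
          rw [hspec, Polynomial.natDegree_X_mul hρ0, natDegree_evalAtDZero_RS_fst, add_comm]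
      _ ≤ _ := natDegree_aeval_le_totalDegree _ (by simp [Fin.forall_fin_two])

theorem totalDegree_cR_add_two_dS (m : ℕ) (hm : 1 ≤ m) :
    (((X 0 * Rpoly m + 2 * X 1 * Spoly m : MvPolynomial (Fin 2) ℤ)).totalDegree : ℚ)
      = (7 * (2 : ℚ) ^ m + 3 - (-1) ^ m) / 6 := by
  obtain ⟨n, rfl⟩ := Nat.exists_eq_add_of_le' hm
  rw [Rpoly, Spoly, Nat.add_sub_cancel, totalDegree_cR_add_two_dS_eq n]
  push_cast
  rw [(degRS_cast_eq n).1]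
  ring
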